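/- arXiv:2409.07334 — 5 statements merged into one kernel-verified Lean document; each statement's English description precedes it below -/
import Mathlib

section
/- Let M be a real symmetric N×N matrix such that M_{ij} < 0 for all i ≠ j. Then there exists an eigenvector v of M associated to the least eigenvalue μ(M) of M (i.e. v ≠ 0 and M v = μ(M) v, where μ(M) ≤ λ for every eigenvalue λ of M) such that v_i ≥ 0 for every i. -/
/-!
Since `μ` is the least eigenvalue, `M - μ • 1` is positive semidefinite, so `μ` minimizes the
Rayleigh quotient of `M` and every vector attaining `μ` there is an eigenvector for `μ`. If `w`
is an eigenvector for `μ`, then `|w|` has the same norm and, the off-diagonal entries of `M`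
being nonpositive, no larger quadratic form than `w`; hence `|w|` is a nonnegative eigenvector.
-/

namespace Matrix

variable {ι : Type*} [Fintype ι]

theorem IsHermitian.posSemidef_sub_smul_one [DecidableEq ι] {M : Matrix ι ι ℝ}
    (hM : M.IsHermitian) {μ : ℝ}
    (hμ : ∀ (l : ℝ) (w : ι → ℝ), w ≠ 0 → M *ᵥ w = l • w → μ ≤ l) :
    (M - μ • 1).PosSemidef := by
  have hA : (M - μ • 1).IsHermitian := hM.sub (isHermitian_one.smul (IsSelfAdjoint.all μ))
  refine hA.posSemidef_iff_eigenvalues_nonneg.mpr fun i => ?_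
  set b : ι → ℝ := ⇑(hA.eigenvectorBasis i)
  have hb0 : b ≠ 0 := (WithLp.ofLp_eq_zero 2).ne.2 (hA.eigenvectorBasis.orthonormal.ne_zero i)
  have hMb : M *ᵥ b = (hA.eigenvalues i + μ) • b := by
    have hAb := hA.mulVec_eigenvectorBasis i
    rw [sub_mulVec, smul_mulVec, one_mulVec] at hAb
    linear_combination (norm := module) hAb
  have := hμ _ b hb0 hMb
  show 0 ≤ hA.eigenvalues i
  linarith

theorem IsHermitian.mulVec_eq_smul_of_dotProduct_mulVec_le [DecidableEq ι] {M : Matrix ι ι ℝ}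
    (hM : M.IsHermitian) {μ : ℝ}
    (hμ : ∀ (l : ℝ) (w : ι → ℝ), w ≠ 0 → M *ᵥ w = l • w → μ ≤ l) {x : ι → ℝ}
    (hx : x ⬝ᵥ M *ᵥ x ≤ μ * (x ⬝ᵥ x)) :
    M *ᵥ x = μ • x := by
  have hpsd := hM.posSemidef_sub_smul_one hμ
  have hquad : x ⬝ᵥ (M - μ • 1) *ᵥ x = x ⬝ᵥ M *ᵥ x - μ * (x ⬝ᵥ x) := by
    rw [sub_mulVec, smul_mulVec, one_mulVec, dotProduct_sub, dotProduct_smul, smul_eq_mul]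
  have hzero : star x ⬝ᵥ (M - μ • 1) *ᵥ x = 0 := by
    have := hpsd.dotProduct_mulVec_nonneg x
    rw [star_trivial] at this ⊢
    linarith
  have := (hpsd.dotProduct_mulVec_zero_iff x).mp hzero
  rw [sub_mulVec, smul_mulVec, one_mulVec] at this
  exact sub_eq_zero.mp this

theorem dotProduct_mulVec_abs_le {M : Matrix ι ι ℝ} (hM : ∀ i j, i ≠ j → M i j ≤ 0)
    (w : ι → ℝ) : |w| ⬝ᵥ M *ᵥ |w| ≤ w ⬝ᵥ M *ᵥ w := by
  simp only [dotProduct, mulVec, Finset.mul_sum, Pi.abs_apply]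
  refine Finset.sum_le_sum fun i _ => Finset.sum_le_sum fun j _ => ?_
  rcases eq_or_ne i j with rfl | hij
  · exact le_of_eq (by linear_combination M i i * abs_mul_abs_self (w i))
  · have hw : w i * w j ≤ |w i| * |w j| := abs_mul (w i) (w j) ▸ le_abs_self _
    nlinarith [hM i j hij]

end Matrix

open Matrix in
theorem least_eigenvalue_has_nonneg_eigenvector_general
    (N : ℕ) (M : Matrix (Fin N) (Fin N) ℝ)
    (hsym : M.IsSymm)
    (hoff : ∀ i j : Fin N, i ≠ j → M i j < 0)
    (μ : ℝ)
    (hμ_eig : ∃ w : Fin N → ℝ, w ≠ 0 ∧ M.mulVec w = μ • w)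
    (hμ_least : ∀ (l : ℝ) (w : Fin N → ℝ), w ≠ 0 → M.mulVec w = l • w → μ ≤ l) :
    ∃ v : Fin N → ℝ, v ≠ 0 ∧ M.mulVec v = μ • v ∧ ∀ i, 0 ≤ v i := by
  obtain ⟨w, hw0, hw⟩ := hμ_eig
  have hM : M.IsHermitian := by
    rwa [IsHermitian, conjTranspose_eq_transpose_of_trivial]
  have habs0 : |w| ≠ 0 := fun h => hw0 (funext fun i => abs_eq_zero.mp (congrFun h i))
  have hquad : |w| ⬝ᵥ M *ᵥ |w| ≤ μ * (|w| ⬝ᵥ |w|) :=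
    calc |w| ⬝ᵥ M *ᵥ |w| ≤ w ⬝ᵥ M *ᵥ w :=
          dotProduct_mulVec_abs_le (fun i j hij => (hoff i j hij).le) w
      _ = μ * (|w| ⬝ᵥ |w|) := by
          rw [hw, dotProduct_smul, smul_eq_mul]
          simp only [dotProduct, Pi.abs_apply, abs_mul_abs_self]
  exact ⟨|w|, habs0, hM.mulVec_eq_smul_of_dotProduct_mulVec_le hμ_least hquad,
    fun i => abs_nonneg (w i)⟩

/-- Let `M` be a real symmetric `N×N` matrix with `M i j < 0` for all
`i ≠ j`. If `μ` is the least eigenvalue of `M` (i.e. `μ` is an eigenvalue and every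
eigenvalue `l` of `M` satisfies `μ ≤ l`), then there is an eigenvector `v` of `M` for `μ`
all of whose components are nonnegative. -/
theorem least_eigenvalue_has_nonneg_eigenvector
    (N : ℕ) (hN : 0 < N) (M : Matrix (Fin N) (Fin N) ℝ)
    (hsym : M.IsSymm)
    (hoff : ∀ i j : Fin N, i ≠ j → M i j < 0)
    (μ : ℝ)
    (hμ_eig : ∃ w : Fin N → ℝ, w ≠ 0 ∧ M.mulVec w = μ • w)
    (hμ_least : ∀ (l : ℝ) (w : Fin N → ℝ), w ≠ 0 → M.mulVec w = l • w → μ ≤ l) :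
    ∃ v : Fin N → ℝ, v ≠ 0 ∧ M.mulVec v = μ • v ∧ ∀ i, 0 ≤ v i :=
  least_eigenvalue_has_nonneg_eigenvector_general N M hsym hoff μ hμ_eig hμ_least
end

section
/- The function U(z,t) = (t² + (1+|z|²)²)^{−1/2} satisfies ∫_{ℂ×ℝ} U³ = 2π, where the integral is with respect to Lebesgue measure on ℂ×ℝ ≅ ℝ³. -/
open MeasureTheory Real

/-- The Jerison–Lee bubble `U(z,t) = (t² + (1+|z|²)²)^{-1/2}` on `H¹ = ℂ × ℝ`. -/
noncomputable def jerisonLeeBubble (p : ℂ × ℝ) : ℝ :=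
  (p.2 ^ 2 + (1 + ‖p.1‖ ^ 2) ^ 2) ^ (-(1 / 2 : ℝ))

/-! Integrating `U³` first along the centre gives `2 (1+|z|²)⁻²`, via the primitive
`t / √(t² + c)` of `c (t² + c)^{-3/2}`; polar coordinates in `ℂ` and the primitive
`-(1+r²)⁻¹/2` of `r (1+r²)⁻²` then give `2 · π`. As `U ≥ 0`, the same fibre integrals
also show that `U³` is integrable, which justifies Fubini. -/

open Set Filter Topology

theorem integrable_of_even_of_integrableOn_Ioi {E : Type*} [NormedAddCommGroup E] {f : ℝ → E}
    (heven : ∀ x, f (-x) = f x) (hf : IntegrableOn f (Ioi 0)) : Integrable f := by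
  rw [← integrableOn_univ, ← Iio_union_Ici (a := 0), integrableOn_union,
    integrableOn_Ici_iff_integrableOn_Ioi]
  refine ⟨?_, hf⟩
  rw [← (Measure.measurePreserving_neg volume).integrableOn_comp_preimage
    (Homeomorph.neg ℝ).measurableEmbedding]
  simpa [Function.comp_def, heven] using hf

theorem tendsto_div_sqrt_sq_add_atTop (c : ℝ) :
    Tendsto (fun t => t / √(t ^ 2 + c)) atTop (𝓝 1) := by
  have hlim : Tendsto (fun t : ℝ => (√(1 + c / t ^ 2))⁻¹) atTop (𝓝 1) := by
    simpa using ((tendsto_const_nhds.div_atTop (tendsto_pow_atTop two_ne_zero)).const_add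
      1).sqrt.inv₀ (by simp)
  refine hlim.congr' ?_
  filter_upwards [eventually_gt_atTop 0] with t ht
  rw [show t ^ 2 + c = t ^ 2 * (1 + c / t ^ 2) by field_simp, Real.sqrt_mul (by positivity),
    Real.sqrt_sq ht.le, div_mul_cancel_left₀ ht.ne']

section SqAdd

variable {c : ℝ}

theorem hasDerivAt_div_sqrt_sq_add (hc : 0 < c) (x : ℝ) :
    HasDerivAt (fun t => t / √(t ^ 2 + c)) (c * (x ^ 2 + c) ^ (-(3 / 2 : ℝ))) x := by
  have hpos : 0 < x ^ 2 + c := by positivity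
  have hsqrt : HasDerivAt (fun t => √(t ^ 2 + c)) (2 * x / (2 * √(x ^ 2 + c))) x :=
    ((hasDerivAt_pow 2 x).add_const c).sqrt hpos.ne' |>.congr_deriv (by ring)
  refine ((hasDerivAt_id' x).div hsqrt (Real.sqrt_pos.2 hpos).ne').congr_deriv ?_
  have hcube : (x ^ 2 + c) ^ (3 / 2 : ℝ) = √(x ^ 2 + c) ^ 3 := by
    rw [Real.sqrt_eq_rpow, ← Real.rpow_mul_natCast hpos.le]
    norm_num
  rw [Real.rpow_neg hpos.le, hcube]
  field_simp
  rw [Real.sq_sqrt hpos.le]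
  ring

theorem hasDerivAt_inv_mul_div_sqrt_sq_add (hc : 0 < c) (x : ℝ) :
    HasDerivAt (fun t => c⁻¹ * (t / √(t ^ 2 + c))) ((x ^ 2 + c) ^ (-(3 / 2 : ℝ))) x := by
  simpa [inv_mul_cancel_left₀ hc.ne'] using (hasDerivAt_div_sqrt_sq_add hc x).const_mul c⁻¹

theorem integral_Ioi_sq_add_rpow_neg_three_halves (hc : 0 < c) :
    ∫ t in Ioi 0, (t ^ 2 + c) ^ (-(3 / 2 : ℝ)) = c⁻¹ := by
  simpa using integral_Ioi_of_hasDerivAt_of_nonneg' (a := 0)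
    (fun x _ => hasDerivAt_inv_mul_div_sqrt_sq_add hc x) (fun x _ => by positivity)
    ((tendsto_div_sqrt_sq_add_atTop c).const_mul c⁻¹)

theorem integrable_sq_add_rpow_neg_three_halves (hc : 0 < c) :
    Integrable fun t : ℝ => (t ^ 2 + c) ^ (-(3 / 2 : ℝ)) := by
  refine integrable_of_even_of_integrableOn_Ioi (by simp) ?_
  simpa using integrableOn_Ioi_deriv_of_nonneg'
    (fun x _ => hasDerivAt_inv_mul_div_sqrt_sq_add hc x) (fun x _ => by positivity)
    ((tendsto_div_sqrt_sq_add_atTop c).const_mul c⁻¹)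

theorem integral_sq_add_rpow_neg_three_halves (hc : 0 < c) :
    ∫ t : ℝ, (t ^ 2 + c) ^ (-(3 / 2 : ℝ)) = 2 * c⁻¹ := by
  have := integral_comp_abs (f := fun t => (t ^ 2 + c) ^ (-(3 / 2 : ℝ)))
  simp only [sq_abs] at this
  rw [this, integral_Ioi_sq_add_rpow_neg_three_halves hc]

end SqAdd

theorem integral_Ioi_mul_inv_one_add_sq_sq :
    ∫ r in Ioi (0 : ℝ), r * ((1 + r ^ 2) ^ 2)⁻¹ = 2⁻¹ := by
  have hderiv (r : ℝ) :
      HasDerivAt (fun r : ℝ => -(2⁻¹ * (1 + r ^ 2)⁻¹)) (r * ((1 + r ^ 2) ^ 2)⁻¹) r := by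
    refine ((((hasDerivAt_pow 2 r).const_add 1).fun_inv (by positivity)).const_mul
      2⁻¹).fun_neg.congr_deriv ?_
    field_simp
    ring
  have hlim : Tendsto (fun r : ℝ => -(2⁻¹ * (1 + r ^ 2)⁻¹)) atTop (𝓝 0) := by
    have h := tendsto_atTop_add_const_left _ 1 (tendsto_pow_atTop (α := ℝ) two_ne_zero)
    simpa using ((tendsto_inv_atTop_zero.comp h).const_mul 2⁻¹).neg
  simpa using integral_Ioi_of_hasDerivAt_of_nonneg' (fun r _ => hderiv r)
    (fun r (hr : 0 < r) => by positivity) hlim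

theorem integral_inv_one_add_norm_sq_sq_complex :
    ∫ z : ℂ, ((1 + ‖z‖ ^ 2) ^ 2)⁻¹ = π := by
  rw [integral_fun_norm_addHaar volume fun r => ((1 + r ^ 2) ^ 2)⁻¹,
    Complex.finrank_real_complex, measureReal_def, Complex.volume_ball]
  simp [integral_Ioi_mul_inv_one_add_sq_sq, mul_left_comm]

theorem integrable_inv_one_add_norm_sq_sq {E : Type*} [NormedAddCommGroup E] [NormedSpace ℝ E]
    [FiniteDimensional ℝ E] [MeasurableSpace E] [BorelSpace E] (μ : Measure E)
    [μ.IsAddHaarMeasure] (hE : Module.finrank ℝ E < 4) :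
    Integrable (fun x : E => ((1 + ‖x‖ ^ 2) ^ 2)⁻¹) μ := by
  refine (integrable_rpow_neg_one_add_norm_sq (μ := μ) (r := 4) (by exact_mod_cast hE)).congr ?_
  filter_upwards with x
  norm_num [Real.rpow_neg (by positivity : (0 : ℝ) ≤ 1 + ‖x‖ ^ 2)]

theorem jerisonLeeBubble_nonneg (p : ℂ × ℝ) : 0 ≤ jerisonLeeBubble p := by
  unfold jerisonLeeBubble
  positivity

theorem jerisonLeeBubble_pow_three (p : ℂ × ℝ) :
    jerisonLeeBubble p ^ 3 = (p.2 ^ 2 + (1 + ‖p.1‖ ^ 2) ^ 2) ^ (-(3 / 2 : ℝ)) := by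
  rw [jerisonLeeBubble, ← Real.rpow_mul_natCast (by positivity)]
  norm_num

theorem integral_jerisonLeeBubble_pow_three_fiber (z : ℂ) :
    ∫ t : ℝ, jerisonLeeBubble (z, t) ^ 3 = 2 * ((1 + ‖z‖ ^ 2) ^ 2)⁻¹ := by
  simpa only [jerisonLeeBubble_pow_three] using
    integral_sq_add_rpow_neg_three_halves (c := (1 + ‖z‖ ^ 2) ^ 2) (by positivity)

theorem integrable_jerisonLeeBubble_pow_three :
    Integrable (fun p => jerisonLeeBubble p ^ 3) (volume.prod volume) := by
  have hcont : Continuous fun p => jerisonLeeBubble p ^ 3 := by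
    simp only [jerisonLeeBubble_pow_three]
    exact Continuous.rpow_const (by fun_prop) fun p => Or.inl (by positivity)
  refine (integrable_prod_iff hcont.aestronglyMeasurable).2 ⟨.of_forall fun z => ?_, ?_⟩
  · simpa only [jerisonLeeBubble_pow_three] using
      integrable_sq_add_rpow_neg_three_halves (c := (1 + ‖z‖ ^ 2) ^ 2) (by positivity)
  · simp only [norm_pow, Real.norm_of_nonneg, jerisonLeeBubble_nonneg,
      integral_jerisonLeeBubble_pow_three_fiber]
    exact (integrable_inv_one_add_norm_sq_sq volume (by simp)).const_mul 2

/-- `∫_{ℂ×ℝ} U³ = 2π`, with respect to Lebesgue measure on `ℂ × ℝ`. -/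
theorem integral_jerisonLeeBubble_cube :
    ∫ p : ℂ × ℝ, (jerisonLeeBubble p) ^ 3 = 2 * π := by
  rw [Measure.volume_eq_prod, integral_prod _ integrable_jerisonLeeBubble_pow_three]
  simp only [integral_jerisonLeeBubble_pow_three_fiber, integral_const_mul,
    integral_inv_one_add_norm_sq_sq_complex]
end

section
/- The function U(z,t) = (t² + (1+|z|²)²)^{−1/2} satisfies ∫_{ℂ×ℝ} U⁴ = π²/4, where the integral is with respect to Lebesgue measure on ℂ×ℝ ≅ ℝ³. -/
/-!
Integrate first in `t`: with `a = 1 + |z|²`, rescaling `t = a u` and the antiderivative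
`(u / (1 + u²) + arctan u) / 2` of `(1 + u²)⁻²` give `∫ (t² + a²)⁻² dt = π / (2 a³)`.
The remaining integral `∫_ℂ (1 + |z|²)⁻³ = π / 2` is computed in polar coordinates, where
`r (1 + r²)⁻³` has the antiderivative `-(1 + r²)⁻² / 4`.
-/

open MeasureTheory Real

open Set Filter Topology

theorem integral_prod_of_nonneg {α β : Type*} [MeasurableSpace α] [MeasurableSpace β]
    {μ : Measure α} {ν : Measure β} [SFinite μ] [SFinite ν] {f : α × β → ℝ} (hf_nonneg : 0 ≤ f)
    (hf : AEStronglyMeasurable f (μ.prod ν))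
    (h_slice : ∀ᵐ x ∂μ, Integrable (fun y => f (x, y)) ν)
    (h_int : Integrable (fun x => ∫ y, f (x, y) ∂ν) μ) :
    ∫ z, f z ∂μ.prod ν = ∫ x, ∫ y, f (x, y) ∂ν ∂μ := by
  refine integral_prod f ((integrable_prod_iff hf).2 ⟨h_slice, ?_⟩)
  simpa only [Real.norm_of_nonneg (hf_nonneg _)] using h_int

theorem tendsto_div_one_add_sq_atTop : Tendsto (fun u : ℝ => u / (1 + u ^ 2)) atTop (𝓝 0) := by
  refine tendsto_of_tendsto_of_tendsto_of_le_of_le' tendsto_const_nhds tendsto_inv_atTop_zero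
    ?_ ?_
  · filter_upwards [eventually_ge_atTop 0] with u hu using by positivity
  · filter_upwards [eventually_gt_atTop 0] with u hu
    rw [div_le_iff₀ (by positivity), inv_mul_eq_div, le_div_iff₀ hu]
    nlinarith

theorem tendsto_div_one_add_sq_atBot : Tendsto (fun u : ℝ => u / (1 + u ^ 2)) atBot (𝓝 0) := by
  simpa [neg_div] using (tendsto_div_one_add_sq_atTop.comp tendsto_neg_atBot_atTop).neg

theorem integrable_inv_one_add_sq_sq : Integrable fun u : ℝ => ((1 + u ^ 2) ^ 2)⁻¹ := by
  refine integrable_inv_one_add_sq.mono' (by fun_prop) (ae_of_all _ fun u => ?_)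
  rw [norm_of_nonneg (by positivity)]
  exact inv_anti₀ (by positivity) (by nlinarith)

theorem integral_inv_one_add_sq_sq : ∫ u : ℝ, ((1 + u ^ 2) ^ 2)⁻¹ = π / 2 := by
  have hderiv (u : ℝ) : HasDerivAt (fun u : ℝ => (u / (1 + u ^ 2) + arctan u) / 2)
      ((1 + u ^ 2) ^ 2)⁻¹ u := by
    have hden : HasDerivAt (fun u : ℝ => 1 + u ^ 2) (2 * u) u := by
      simpa using (hasDerivAt_pow 2 u).const_add 1
    refine ((((hasDerivAt_id' u).div hden (by positivity)).add (hasDerivAt_arctan u)).div_const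
      2).congr_deriv ?_
    field_simp
    ring
  have htop := (tendsto_div_one_add_sq_atTop.add
    (tendsto_arctan_atTop.mono_right nhdsWithin_le_nhds)).div_const 2
  have hbot := (tendsto_div_one_add_sq_atBot.add
    (tendsto_arctan_atBot.mono_right nhdsWithin_le_nhds)).div_const 2
  rw [integral_of_hasDerivAt_of_tendsto hderiv integrable_inv_one_add_sq_sq hbot htop]
  ring

theorem integral_inv_sq_add_sq_sq {a : ℝ} (ha : 0 < a) :
    ∫ t : ℝ, ((t ^ 2 + a ^ 2) ^ 2)⁻¹ = π / (2 * a ^ 3) := by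
  have hscale (t : ℝ) : ((t ^ 2 + a ^ 2) ^ 2)⁻¹ = a⁻¹ ^ 4 * ((1 + (a⁻¹ * t) ^ 2) ^ 2)⁻¹ := by
    field_simp
    ring
  simp_rw [hscale]
  rw [integral_const_mul, Measure.integral_comp_mul_left (fun u : ℝ => ((1 + u ^ 2) ^ 2)⁻¹),
    integral_inv_one_add_sq_sq, inv_inv, abs_of_pos ha, smul_eq_mul]
  field_simp

theorem integral_Ioi_mul_one_add_sq_rpow_neg {s : ℝ} (hs : 1 < s) :
    ∫ r in Ioi (0 : ℝ), r * (1 + r ^ 2) ^ (-s) = 1 / (2 * (s - 1)) := by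
  have hs' : s - 1 ≠ 0 := by linarith
  have hderiv : ∀ r ∈ Ici (0 : ℝ), HasDerivAt (fun r : ℝ => -(1 + r ^ 2) ^ (1 - s) / (2 * (s - 1)))
      (r * (1 + r ^ 2) ^ (-s)) r := by
    intro r _
    have hden : HasDerivAt (fun u : ℝ => 1 + u ^ 2) (2 * r) r := by
      simpa using (hasDerivAt_pow 2 r).const_add 1
    refine ((hden.rpow_const (p := 1 - s) (Or.inl (by positivity))).neg.div_const
      (2 * (s - 1))).congr_deriv ?_
    rw [show 1 - s - 1 = -s by ring]
    field_simp
    ring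
  have htop : Tendsto (fun r : ℝ => -(1 + r ^ 2) ^ (1 - s) / (2 * (s - 1))) atTop (𝓝 0) := by
    have h : Tendsto (fun r : ℝ => 1 + r ^ 2) atTop atTop :=
      tendsto_atTop_add_const_left _ _ (tendsto_pow_atTop two_ne_zero)
    have := ((tendsto_rpow_neg_atTop (by linarith : 0 < s - 1)).comp h).neg.div_const (2 * (s - 1))
    simpa [neg_sub] using this
  rw [integral_Ioi_of_hasDerivAt_of_nonneg' hderiv (fun r hr => by have : 0 < r := hr; positivity)
    htop]
  norm_num
  field_simp

theorem integral_one_add_norm_sq_rpow_neg {s : ℝ} (hs : 1 < s) :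
    ∫ z : ℂ, (1 + ‖z‖ ^ 2) ^ (-s) = π / (s - 1) := by
  rw [← Complex.integral_comp_polarCoord_symm fun z : ℂ => (1 + ‖z‖ ^ 2) ^ (-s),
    polarCoord_target]
  calc ∫ p in Ioi (0 : ℝ) ×ˢ Ioo (-π) π, p.1 • (1 + ‖Complex.polarCoord.symm p‖ ^ 2) ^ (-s)
      = ∫ p in Ioi (0 : ℝ) ×ˢ Ioo (-π) π, p.1 * (1 + p.1 ^ 2) ^ (-s) * 1 := by
        simp only [smul_eq_mul, Complex.norm_polarCoord_symm, sq_abs, mul_one]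
    _ = (∫ r in Ioi (0 : ℝ), r * (1 + r ^ 2) ^ (-s)) * ∫ _ in Ioo (-π) π, (1 : ℝ) := by
        rw [← setIntegral_prod_mul, Measure.volume_eq_prod]
    _ = π / (s - 1) := by
        rw [integral_Ioi_mul_one_add_sq_rpow_neg hs, setIntegral_const, smul_eq_mul, mul_one,
          Real.volume_real_Ioo_of_le (by linarith [pi_pos])]
        field_simp
        ring

theorem jerisonLeeBubble_pow_four (p : ℂ × ℝ) :
    jerisonLeeBubble p ^ 4 = ((p.2 ^ 2 + (1 + ‖p.1‖ ^ 2) ^ 2) ^ 2)⁻¹ := by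
  have hpos : 0 < p.2 ^ 2 + (1 + ‖p.1‖ ^ 2) ^ 2 := by positivity
  rw [jerisonLeeBubble, ← rpow_natCast, ← rpow_mul hpos.le,
    show -(1 / 2 : ℝ) * (4 : ℕ) = -2 by norm_num, rpow_neg hpos.le, rpow_two]

/-- `∫_{ℂ×ℝ} U⁴ = π²/4`, with respect to Lebesgue measure on `ℂ × ℝ`. -/
theorem integral_jerisonLeeBubble_fourth :
    ∫ p : ℂ × ℝ, (jerisonLeeBubble p) ^ 4 = π ^ 2 / 4 := by
  have hslice (z : ℂ) : ∫ t : ℝ, ((t ^ 2 + (1 + ‖z‖ ^ 2) ^ 2) ^ 2)⁻¹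
      = π / 2 * (1 + ‖z‖ ^ 2) ^ (-3 : ℝ) := by
    rw [integral_inv_sq_add_sq_sq (by positivity), rpow_neg (by positivity), rpow_ofNat]
    field_simp
  have hradial : ∫ z : ℂ, (1 + ‖z‖ ^ 2) ^ (-3 : ℝ) = π / 2 := by
    rw [integral_one_add_norm_sq_rpow_neg (by norm_num)]
    norm_num
  simp_rw [jerisonLeeBubble_pow_four]
  -- the slices and the slice integrals are integrable because their integrals are nonzero
  rw [Measure.volume_eq_prod, integral_prod_of_nonneg (fun p => by positivity) (by fun_prop)
    (ae_of_all _ fun z => .of_integral_ne_zero (by rw [hslice]; positivity))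
    (.of_integral_ne_zero (by simp_rw [hslice]; rw [integral_const_mul, hradial]; positivity))]
  simp_rw [hslice]
  rw [integral_const_mul, hradial]
  ring
end

section
/- Let M be a real symmetric positive definite N×N matrix, let c₁,…,c_N > 0, and let τ > 0. Then there exists exactly one vector s ∈ (0,∞)^N such that s_k·(M s)_k = τ·c_k for every k = 1,…,N. Moreover there exist constants 0 < a ≤ b, depending only on M and on c₁,…,c_N (not on τ), such that for all τ ∈ (0,1] the unique solution satisfies a·√τ ≤ s_k ≤ b·√τ for every k. (Equivalently, setting λ_k = 1/s_k, the function F(λ) = ½·Σ_{j,k} M_{kj}/(λ_j λ_k) + τ·Σ_k c_k·log λ_k has exactly one critical point in (0,∞)^N, and its components are of order τ^{−1/2}.) -/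
/-!
Writing `s = exp ∘ x`, the solutions of `s_k (M s)_k = d_k` are exactly the critical points of
`G(x) = ½ eˣ·M eˣ - d·x`. Positive definiteness gives `eˣ·M eˣ ≥ μ Σ e^{2x_k}`, so `G` is coercive
and a global minimiser exists. Uniqueness is monotonicity: for two positive solutions `u, v`,
`(u - v)·M(u - v) = Σ_k (u_k - v_k)(d_k/u_k - d_k/v_k) ≤ 0`. The equation is homogeneous of
degree two in `s`, so the solution for `τ` is `√τ` times the solution for `τ = 1`.
-/

open Real Filter Topology Matrix

theorem exists_pos_mul_norm_sq_le_of_continuous_of_homogeneous {E : Type*}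
    [NormedAddCommGroup E] [NormedSpace ℝ E] [FiniteDimensional ℝ E] {Q : E → ℝ}
    (hQ : Continuous Q) (hsmul : ∀ (t : ℝ) (x : E), Q (t • x) = t ^ 2 * Q x)
    (hpos : ∀ x ≠ 0, 0 < Q x) : ∃ μ > 0, ∀ x, μ * ‖x‖ ^ 2 ≤ Q x := by
  cases subsingleton_or_nontrivial E
  · refine ⟨1, one_pos, fun x => ?_⟩
    simpa [Subsingleton.elim x 0] using (hsmul 0 0).ge
  obtain ⟨x₀, hx₀, hmin⟩ := (isCompact_sphere (0 : E) 1).exists_isMinOn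
    (NormedSpace.sphere_nonempty.2 zero_le_one) hQ.continuousOn
  have hx₀ne : x₀ ≠ 0 := ne_zero_of_mem_unit_sphere ⟨x₀, hx₀⟩
  refine ⟨Q x₀, hpos x₀ hx₀ne, fun x => ?_⟩
  rcases eq_or_ne x 0 with rfl | hx
  · simpa using (hsmul 0 0).ge
  have hnorm : ‖x‖ ≠ 0 := norm_ne_zero_iff.2 hx
  have hunit : ‖x‖⁻¹ • x ∈ Metric.sphere (0 : E) 1 := by
    simp [norm_smul, hnorm]
  calc Q x₀ * ‖x‖ ^ 2 ≤ Q (‖x‖⁻¹ • x) * ‖x‖ ^ 2 := by gcongr; exact hmin hunit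
    _ = Q x := by rw [hsmul]; field_simp

theorem tendsto_sum_apply_cocompact_atTop {ι : Type*} [Fintype ι] {X : ι → Type*}
    [∀ i, TopologicalSpace (X i)] {f : ∀ i, X i → ℝ} (hbdd : ∀ i, BddBelow (Set.range (f i)))
    (hf : ∀ i, Tendsto (f i) (cocompact (X i)) atTop) :
    Tendsto (fun x : ∀ i, X i => ∑ i, f i (x i)) (cocompact (∀ i, X i)) atTop := by
  classical
  choose m hm using hbdd
  rw [← coprodᵢ_cocompact, Filter.coprodᵢ, tendsto_iSup]
  intro i
  simp_rw [← Finset.add_sum_erase _ _ (Finset.mem_univ i)]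
  refine (tendsto_atTop_add_left_of_le _ (∑ j ∈ Finset.univ.erase i, m j) (fun x => ?_)
    ((hf i).comp tendsto_comap)).congr fun x => add_comm _ _
  exact Finset.sum_le_sum fun j _ => hm j ⟨x j, rfl⟩

theorem tendsto_mul_exp_sq_sub_mul_cocompact_atTop {a b : ℝ} (ha : 0 < a) (hb : 0 < b) :
    Tendsto (fun t => a * exp t ^ 2 - b * t) (cocompact ℝ) atTop := by
  rw [cocompact_eq_atBot_atTop, tendsto_sup]
  constructor
  · simp only [sub_eq_add_neg]
    refine tendsto_atTop_add_left_of_le _ 0 (fun t => by positivity) ?_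
    exact (tendsto_neg_atBot_atTop.const_mul_atTop hb).congr fun t => mul_neg b t
  · have hexp : Tendsto (fun t => exp t * (a * exp t - b)) atTop atTop :=
      tendsto_exp_atTop.atTop_mul_atTop₀
        (tendsto_atTop_add_const_right _ _ (tendsto_exp_atTop.const_mul_atTop ha))
    refine tendsto_atTop_mono (fun t => ?_) hexp
    nlinarith [add_one_le_exp t]

theorem exists_pos_le_and_le_of_pos {ι : Type*} [Finite ι] {u : ι → ℝ} (hu : ∀ k, 0 < u k) :
    ∃ a b : ℝ, 0 < a ∧ a ≤ b ∧ ∀ k, a ≤ u k ∧ u k ≤ b := by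
  have hsmall : ∀ᶠ a in 𝓝 (0 : ℝ), a ≤ 1 ∧ ∀ k, a ≤ u k :=
    (eventually_le_nhds one_pos).and (eventually_all.2 fun k => eventually_le_nhds (hu k))
  obtain ⟨a, ⟨ha1, hau⟩, ha⟩ := ((hsmall.filter_mono nhdsWithin_le_nhds).and
    (self_mem_nhdsWithin (s := Set.Ioi 0))).exists
  obtain ⟨b, hb⟩ := (Set.finite_range u).bddAbove
  exact ⟨a, max b 1, ha, ha1.trans (le_max_right _ _),
    fun k => ⟨hau k, (hb ⟨k, rfl⟩).trans (le_max_left _ _)⟩⟩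

section

variable {ι : Type*} [Fintype ι]

theorem Matrix.PosDef.exists_pos_mul_dotProduct_self_le
    {M : Matrix ι ι ℝ} (hM : M.PosDef) : ∃ μ > 0, ∀ u : ι → ℝ, μ * (u ⬝ᵥ u) ≤ u ⬝ᵥ M *ᵥ u := by
  obtain ⟨μ, hμ, hle⟩ := exists_pos_mul_norm_sq_le_of_continuous_of_homogeneous
    (Q := fun x : EuclideanSpace ℝ ι => x.ofLp ⬝ᵥ M *ᵥ x.ofLp) (by fun_prop)
    (fun t x => by
      simp only [WithLp.ofLp_smul, mulVec_smul, dotProduct_smul, smul_dotProduct, smul_eq_mul]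
      ring)
    (fun x hx => by simpa using hM.dotProduct_mulVec_pos (x := x.ofLp) (by simpa using hx))
  refine ⟨μ, hμ, fun u => ?_⟩
  have := hle (WithLp.toLp 2 u)
  rw [EuclideanSpace.real_norm_sq_eq] at this
  simpa [dotProduct, sq] using this

theorem HasDerivAt.dotProduct_mulVec_self {M : Matrix ι ι ℝ} (hM : M.IsSymm) {γ : ℝ → ι → ℝ}
    {γ' : ι → ℝ} {t : ℝ} (hγ : HasDerivAt γ γ' t) :
    HasDerivAt (fun s => γ s ⬝ᵥ M *ᵥ γ s) (2 * (γ' ⬝ᵥ M *ᵥ γ t)) t := by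
  have hi : ∀ i, HasDerivAt (fun s => γ s i) (γ' i) t := hasDerivAt_pi.1 hγ
  have hMi : ∀ i, HasDerivAt (fun s => (M *ᵥ γ s) i) ((M *ᵥ γ') i) t := fun i =>
    HasDerivAt.fun_sum fun j _ => (hi j).const_mul (M i j)
  have hsymm : γ t ⬝ᵥ M *ᵥ γ' = γ' ⬝ᵥ M *ᵥ γ t := by
    rw [dotProduct_mulVec, ← mulVec_transpose, hM.eq, dotProduct_comm]
  refine (HasDerivAt.fun_sum fun i _ => (hi i).mul (hMi i)).congr_deriv ?_
  rw [Finset.sum_add_distrib]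
  change γ' ⬝ᵥ M *ᵥ γ t + γ t ⬝ᵥ M *ᵥ γ' = _
  rw [hsymm, two_mul]

/-- In the paper's variables `λ = exp ∘ (-x)` this is `F(λ)`, with `d = τ • c`. -/
noncomputable def reducedPotential (M : Matrix ι ι ℝ) (d x : ι → ℝ) : ℝ :=
  (exp ∘ x) ⬝ᵥ M *ᵥ (exp ∘ x) / 2 - d ⬝ᵥ x

theorem continuous_reducedPotential (M : Matrix ι ι ℝ) (d : ι → ℝ) :
    Continuous (reducedPotential M d) := by
  unfold reducedPotential
  fun_prop

theorem hasDerivAt_reducedPotential_update [DecidableEq ι] {M : Matrix ι ι ℝ} (hM : M.IsSymm)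
    (d x : ι → ℝ) (k : ι) :
    HasDerivAt (fun t => reducedPotential M d (Function.update x k t))
      (exp (x k) * (M *ᵥ (exp ∘ x)) k - d k) (x k) := by
  have hupd := hasDerivAt_pi.1 (hasDerivAt_update x k (x k))
  have hexp :
      HasDerivAt (fun t => exp ∘ Function.update x k t) (Pi.single k (exp (x k))) (x k) := by
    refine hasDerivAt_pi.2 fun i => ((hupd i).exp).congr_deriv ?_
    rcases eq_or_ne i k with rfl | hi <;> simp [*]
  have hlin : HasDerivAt (fun t => d ⬝ᵥ Function.update x k t) (d k) (x k) :=
    (HasDerivAt.fun_sum fun i _ => (hupd i).const_mul (d i)).congr_deriv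
      (dotProduct_single_one d k)
  refine (((hexp.dotProduct_mulVec_self hM).div_const 2).sub hlin).congr_deriv ?_
  simp [single_dotProduct]

theorem tendsto_reducedPotential_cocompact {M : Matrix ι ι ℝ} (hM : M.PosDef) {d : ι → ℝ}
    (hd : ∀ k, 0 < d k) : Tendsto (reducedPotential M d) (cocompact (ι → ℝ)) atTop := by
  obtain ⟨μ, hμ, hcoer⟩ := hM.exists_pos_mul_dotProduct_self_le
  have hg : ∀ k, Tendsto (fun t => μ / 2 * exp t ^ 2 - d k * t) (cocompact ℝ) atTop := fun k =>
    tendsto_mul_exp_sq_sub_mul_cocompact_atTop (half_pos hμ) (hd k)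
  have hbdd : ∀ k, BddBelow (Set.range fun t => μ / 2 * exp t ^ 2 - d k * t) := fun k => by
    have hcont : Continuous fun t => μ / 2 * exp t ^ 2 - d k * t := by fun_prop
    obtain ⟨t₀, ht₀⟩ := hcont.exists_forall_le (hg k)
    exact ⟨_, Set.forall_mem_range.2 ht₀⟩
  refine tendsto_atTop_mono (fun x => ?_) (tendsto_sum_apply_cocompact_atTop hbdd hg)
  have := hcoer (exp ∘ x)
  simp only [reducedPotential, dotProduct, Finset.sum_sub_distrib, ← Finset.mul_sum] at this ⊢
  simp only [Function.comp_apply, ← sq] at this ⊢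
  linarith

theorem Matrix.PosDef.exists_pos_mul_mulVec_eq {M : Matrix ι ι ℝ} (hM : M.PosDef) {d : ι → ℝ}
    (hd : ∀ k, 0 < d k) : ∃ s : ι → ℝ, (∀ k, 0 < s k) ∧ ∀ k, s k * (M *ᵥ s) k = d k := by
  classical
  obtain ⟨x, hx⟩ := (continuous_reducedPotential M d).exists_forall_le
    (tendsto_reducedPotential_cocompact hM hd)
  refine ⟨exp ∘ x, fun k => exp_pos _, fun k => ?_⟩
  have hmin : IsLocalMin (fun t => reducedPotential M d (Function.update x k t)) (x k) :=
    Eventually.of_forall fun t => by simpa using hx (Function.update x k t)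
  exact sub_eq_zero.1 <| hmin.hasDerivAt_eq_zero <|
    hasDerivAt_reducedPotential_update (isHermitian_iff_isSymm.1 hM.isHermitian) d x k

theorem Matrix.PosDef.eq_of_mul_mulVec_eq {M : Matrix ι ι ℝ} (hM : M.PosDef) {d u v : ι → ℝ}
    (hd : ∀ k, 0 ≤ d k) (hu : ∀ k, 0 < u k) (hv : ∀ k, 0 < v k)
    (hud : ∀ k, u k * (M *ᵥ u) k = d k) (hvd : ∀ k, v k * (M *ᵥ v) k = d k) : u = v := by
  by_contra hne
  have hpos := hM.dotProduct_mulVec_pos (sub_ne_zero.2 hne)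
  have hterm : ∀ k, (u k - v k) * ((M *ᵥ u) k - (M *ᵥ v) k) ≤ 0 := fun k => by
    have hprod : (u k - v k) * ((M *ᵥ u) k - (M *ᵥ v) k) * (u k * v k)
        = -(d k * (u k - v k) ^ 2) := by
      linear_combination (u k - v k) * v k * hud k - (u k - v k) * u k * hvd k
    refine nonpos_of_mul_nonpos_left ?_ (mul_pos (hu k) (hv k))
    rw [hprod]
    exact neg_nonpos.2 (mul_nonneg (hd k) (sq_nonneg _))
  have hnonpos : (u - v) ⬝ᵥ M *ᵥ (u - v) ≤ 0 := by
    simpa only [mulVec_sub, dotProduct, Pi.sub_apply] using Finset.sum_nonpos fun k _ => hterm k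
  simp only [star_trivial] at hpos
  linarith

theorem smul_mul_mulVec_smul (M : Matrix ι ι ℝ) (r : ℝ) (s : ι → ℝ) (k : ι) :
    (r • s) k * (M *ᵥ (r • s)) k = r ^ 2 * (s k * (M *ᵥ s) k) := by
  simp only [mulVec_smul, Pi.smul_apply, smul_eq_mul]
  ring

end

theorem posdef_reduced_system_unique_solution_general
    (N : ℕ) (M : Matrix (Fin N) (Fin N) ℝ) (hM : M.PosDef)
    (c : Fin N → ℝ) (hc : ∀ k, 0 < c k) :
    (∀ τ : ℝ, 0 < τ →
      ∃! s : Fin N → ℝ, (∀ k, 0 < s k) ∧ ∀ k, s k * M.mulVec s k = τ * c k) ∧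
    (∃ a b : ℝ, 0 < a ∧ a ≤ b ∧
      ∀ τ : ℝ, 0 < τ → τ ≤ 1 →
        ∀ s : Fin N → ℝ, (∀ k, 0 < s k) → (∀ k, s k * M.mulVec s k = τ * c k) →
          ∀ k, a * Real.sqrt τ ≤ s k ∧ s k ≤ b * Real.sqrt τ) := by
  have hτc : ∀ τ : ℝ, 0 < τ → ∀ k, 0 < τ * c k := fun τ hτ k => mul_pos hτ (hc k)
  have hsol : ∀ τ : ℝ, 0 < τ →
      ∃! s : Fin N → ℝ, (∀ k, 0 < s k) ∧ ∀ k, s k * M.mulVec s k = τ * c k := fun τ hτ => by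
    obtain ⟨s, hs, hsM⟩ := hM.exists_pos_mul_mulVec_eq (hτc τ hτ)
    exact ⟨s, ⟨hs, hsM⟩, fun v hv =>
      hM.eq_of_mul_mulVec_eq (fun k => (hτc τ hτ k).le) hv.1 hs hv.2 hsM⟩
  refine ⟨hsol, ?_⟩
  obtain ⟨u, ⟨hu, huM⟩, -⟩ := hsol 1 one_pos
  obtain ⟨a, b, ha, hab, hbounds⟩ := exists_pos_le_and_le_of_pos hu
  refine ⟨a, b, ha, hab, fun τ hτ _ s hs hsM k => ?_⟩
  have hscaled : s = √τ • u := hM.eq_of_mul_mulVec_eq (fun k => (hτc τ hτ k).le) hs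
    (fun k => mul_pos (sqrt_pos.2 hτ) (hu k)) hsM
    (fun k => by rw [smul_mul_mulVec_smul, huM, sq_sqrt hτ.le, one_mul])
  rw [hscaled, Pi.smul_apply, smul_eq_mul, mul_comm a, mul_comm b]
  exact ⟨mul_le_mul_of_nonneg_left (hbounds k).1 (sqrt_nonneg τ),
    mul_le_mul_of_nonneg_left (hbounds k).2 (sqrt_nonneg τ)⟩

/-- Let `M` be a real symmetric positive definite `N×N` matrix, let
`c₁,…,c_N > 0` and `τ > 0`. Then there is exactly one vector `s ∈ (0,∞)^N` with
`s_k·(M s)_k = τ·c_k` for every `k`; moreover there exist constants `0 < a ≤ b`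
depending only on `M` and `c` (not on `τ`) such that for all `τ ∈ (0,1]` the unique
solution satisfies `a·√τ ≤ s_k ≤ b·√τ` for every `k`. -/
theorem posdef_reduced_system_unique_solution
    (N : ℕ) (hN : 0 < N) (M : Matrix (Fin N) (Fin N) ℝ) (hM : M.PosDef)
    (c : Fin N → ℝ) (hc : ∀ k, 0 < c k) :
    (∀ τ : ℝ, 0 < τ →
      ∃! s : Fin N → ℝ, (∀ k, 0 < s k) ∧ ∀ k, s k * M.mulVec s k = τ * c k) ∧
    (∃ a b : ℝ, 0 < a ∧ a ≤ b ∧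
      ∀ τ : ℝ, 0 < τ → τ ≤ 1 →
        ∀ s : Fin N → ℝ, (∀ k, 0 < s k) → (∀ k, s k * M.mulVec s k = τ * c k) →
          ∀ k, a * Real.sqrt τ ≤ s k ∧ s k ≤ b * Real.sqrt τ) :=
  posdef_reduced_system_unique_solution_general N M hM c hc
end

section
/- There exists a constant C > 0 such that for every τ ∈ (0, 1/2] and every R with 1 ≤ R ≤ τ^{−1}, one has ( ∫_{B_R} ( (1+|p|_K)^{−6+2τ} − (1+|p|_K)^{−6} )^{4/3} dp )^{3/4} ≤ C·τ·|log τ|, where B_R = { p ∈ ℂ×ℝ : |p|_K < R } is the Korányi ball of radius R and the integral is with respect to Lebesgue measure. (This is the key estimate showing ‖φ_{p,λ}^{3−τ} − φ_{p,λ}^{3}‖_{L^{4/3}} = O(τ|log τ|) for the bubbles with λ ∼ τ^{−1/2}.) -/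
set_option maxHeartbeats 1000000


open MeasureTheory Real

/-- The Korányi norm on `ℂ × ℝ`: `|(z,t)|_K = (|z|⁴ + t²)^{1/4}`. -/
noncomputable def koranyiNorm (p : ℂ × ℝ) : ℝ :=
  (‖p.1‖ ^ 4 + p.2 ^ 2) ^ ((1 : ℝ) / 4)

lemma koranyiNorm_nonneg (p : ℂ × ℝ) : 0 ≤ koranyiNorm p :=
  Real.rpow_nonneg (by positivity) _

lemma measurable_koranyiNorm : Measurable koranyiNorm := by
  unfold koranyiNorm
  fun_prop

lemma koranyiNorm_pow_four (p : ℂ × ℝ) :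
    koranyiNorm p ^ (4 : ℕ) = ‖p.1‖ ^ 4 + p.2 ^ 2 := by
  have h : (0:ℝ) ≤ ‖p.1‖ ^ 4 + p.2 ^ 2 := by positivity
  rw [koranyiNorm, ← Real.rpow_natCast (((‖p.1‖ ^ 4 + p.2 ^ 2)) ^ ((1:ℝ)/4)) 4,
    ← Real.rpow_mul h]
  norm_num

lemma norm_fst_le_koranyi (p : ℂ × ℝ) : ‖p.1‖ ≤ koranyiNorm p := by
  have h4 := koranyiNorm_pow_four p
  have hk := koranyiNorm_nonneg p
  have hle : ‖p.1‖ ^ 4 ≤ koranyiNorm p ^ 4 := by nlinarith [sq_nonneg p.2]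
  exact (pow_le_pow_iff_left₀ (norm_nonneg p.1) hk (by norm_num)).mp hle

lemma abs_snd_le_koranyi_sq (p : ℂ × ℝ) : |p.2| ≤ koranyiNorm p ^ 2 := by
  have h4 := koranyiNorm_pow_four p
  have hk := koranyiNorm_nonneg p
  have hle : |p.2| ^ 2 ≤ (koranyiNorm p ^ 2) ^ 2 := by
    rw [sq_abs]
    nlinarith [pow_nonneg (norm_nonneg p.1) 4]
  exact (pow_le_pow_iff_left₀ (abs_nonneg p.2) (by positivity) (by norm_num)).mp hle

/-- There exists `C > 0` such that for every `τ ∈ (0, 1/2]` and every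
`R` with `1 ≤ R ≤ τ⁻¹`,
`( ∫_{B_R} ( (1+|p|_K)^{−6+2τ} − (1+|p|_K)^{−6} )^{4/3} dp )^{3/4} ≤ C·τ·|log τ|`,
where `B_R` is the Korányi ball of radius `R` and the integral is with respect to
Lebesgue measure on `ℂ × ℝ`. -/
theorem koranyi_ball_L43_estimate :
    ∃ C : ℝ, 0 < C ∧
      ∀ τ : ℝ, 0 < τ → τ ≤ 1 / 2 →
        ∀ R : ℝ, 1 ≤ R → R ≤ τ⁻¹ →
          (∫ p in {p : ℂ × ℝ | koranyiNorm p < R},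
              ((1 + koranyiNorm p) ^ (-6 + 2 * τ)
                - (1 + koranyiNorm p) ^ (-(6 : ℝ))) ^ ((4 : ℝ) / 3)) ^ ((3 : ℝ) / 4)
            ≤ C * (τ * |Real.log τ|) := by
  -- the dominating integrable function on ℂ × ℝ
  set h : ℂ × ℝ → ℝ := fun p => (1 + ‖p.1‖) ^ (-(11/3 : ℝ)) * (1 + ‖p.2‖) ^ (-(11/6 : ℝ))
    with hh
  have h1 : Integrable (fun z : ℂ => (1 + ‖z‖) ^ (-(11/3 : ℝ))) := by
    apply integrable_one_add_norm
    rw [Complex.finrank_real_complex]; norm_num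
  have h2 : Integrable (fun t : ℝ => (1 + ‖t‖) ^ (-(11/6 : ℝ))) := by
    apply integrable_one_add_norm
    simp; norm_num
  have hInt : Integrable h := by
    rw [hh, show (volume : Measure (ℂ × ℝ)) = volume.prod volume from Measure.volume_eq_prod ℂ ℝ]
    exact h1.mul_prod h2
  have hnonneg : ∀ p, 0 ≤ h p := fun p => by positivity
  set I : ℝ := ∫ p, h p with hI
  have hI0 : 0 ≤ I := integral_nonneg hnonneg
  refine ⟨(4 * Real.exp 2 * I ^ ((3:ℝ)/4) + 1) * 2, by positivity, ?_⟩
  intro τ hτ0 hτ R hR1 hRτ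
  -- pointwise bound on the ball
  have key : ∀ p : ℂ × ℝ, koranyiNorm p < R →
      ((1 + koranyiNorm p) ^ (-6 + 2 * τ) - (1 + koranyiNorm p) ^ (-(6 : ℝ))) ^ ((4 : ℝ) / 3)
        ≤ (4 * Real.exp 2 * τ) ^ ((4:ℝ)/3) * h p := by
    intro p hp
    set r := koranyiNorm p with hr
    have hr0 : 0 ≤ r := koranyiNorm_nonneg p
    have h1r : (1:ℝ) ≤ 1 + r := by linarith
    have h1rpos : (0:ℝ) < 1 + r := by linarith
    -- step 1 : difference ≤ 4 e² τ (1+r)^{-11/2}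
    have hsplit : (1 + r) ^ (-6 + 2 * τ) = (1 + r) ^ (-(6:ℝ)) * (1 + r) ^ (2 * τ) := by
      rw [← Real.rpow_add h1rpos]
    have hlog0 : 0 ≤ Real.log (1 + r) := Real.log_nonneg h1r
    have hx2 : 2 * τ * Real.log (1 + r) ≤ 2 := by
      have hl1 : Real.log (1 + r) ≤ Real.log (1 + τ⁻¹) := by
        apply Real.log_le_log h1rpos
        have : r < τ⁻¹ := lt_of_lt_of_le hp hRτ
        linarith
      have hl2 : Real.log (1 + τ⁻¹) ≤ τ⁻¹ := by
        have := Real.log_le_sub_one_of_pos (show (0:ℝ) < 1 + τ⁻¹ by positivity)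
        linarith
      have hτinv : 2 * τ * τ⁻¹ = 2 := by field_simp
      calc 2 * τ * Real.log (1 + r) ≤ 2 * τ * τ⁻¹ := by
            apply mul_le_mul_of_nonneg_left (hl1.trans hl2) (by linarith)
        _ = 2 := hτinv
    have hexpx : (1 + r) ^ (2 * τ) = Real.exp (2 * τ * Real.log (1 + r)) := by
      rw [Real.rpow_def_of_pos h1rpos]; ring_nf
    set x : ℝ := 2 * τ * Real.log (1 + r) with hxdef
    have hx0 : 0 ≤ x := by positivity
    have hexp1 : Real.exp x - 1 ≤ x * Real.exp x := by
      have h := Real.add_one_le_exp (-x)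
      rw [Real.exp_neg] at h
      nlinarith [Real.exp_pos x, mul_inv_cancel₀ (Real.exp_pos x).ne']
    have hexp2 : Real.exp x ≤ Real.exp 2 := Real.exp_le_exp.mpr hx2
    have hdiff : (1 + r) ^ (2 * τ) - 1 ≤ x * Real.exp 2 := by
      rw [hexpx]
      calc Real.exp x - 1 ≤ x * Real.exp x := hexp1
        _ ≤ x * Real.exp 2 := by apply mul_le_mul_of_nonneg_left hexp2 hx0
    -- log(1+r) ≤ 2 √(1+r)
    have hlogsqrt : Real.log (1 + r) ≤ 2 * (1 + r) ^ ((1:ℝ)/2) := by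
      have h1 : Real.log (1 + r) = 2 * Real.log (Real.sqrt (1 + r)) := by
        rw [Real.log_sqrt (by linarith)]; ring
      have h2 : Real.log (Real.sqrt (1 + r)) ≤ Real.sqrt (1 + r) := by
        have := Real.log_le_sub_one_of_pos (Real.sqrt_pos.mpr h1rpos)
        linarith
      rw [h1, ← Real.sqrt_eq_rpow]
      nlinarith [Real.sqrt_nonneg (1 + r)]
    have hxbound : x ≤ 2 * τ * (2 * (1 + r) ^ ((1:ℝ)/2)) := by
      rw [hxdef]
      apply mul_le_mul_of_nonneg_left hlogsqrt (by linarith)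
    have hrpowpos : ∀ s : ℝ, (0:ℝ) < (1 + r) ^ s := fun s => Real.rpow_pos_of_pos h1rpos s
    have step1 : (1 + r) ^ (-6 + 2 * τ) - (1 + r) ^ (-(6:ℝ))
        ≤ 4 * Real.exp 2 * τ * (1 + r) ^ (-(11/2 : ℝ)) := by
      rw [hsplit]
      have : (1 + r) ^ (-(6:ℝ)) * (1 + r) ^ (2 * τ) - (1 + r) ^ (-(6:ℝ))
          = (1 + r) ^ (-(6:ℝ)) * ((1 + r) ^ (2 * τ) - 1) := by ring
      rw [this]
      have hb : (1 + r) ^ (2 * τ) - 1 ≤ 4 * Real.exp 2 * τ * (1 + r) ^ ((1:ℝ)/2) := by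
        calc (1 + r) ^ (2 * τ) - 1 ≤ x * Real.exp 2 := hdiff
          _ ≤ (2 * τ * (2 * (1 + r) ^ ((1:ℝ)/2))) * Real.exp 2 := by
              apply mul_le_mul_of_nonneg_right hxbound (Real.exp_pos 2).le
          _ = 4 * Real.exp 2 * τ * (1 + r) ^ ((1:ℝ)/2) := by ring
      calc (1 + r) ^ (-(6:ℝ)) * ((1 + r) ^ (2 * τ) - 1)
          ≤ (1 + r) ^ (-(6:ℝ)) * (4 * Real.exp 2 * τ * (1 + r) ^ ((1:ℝ)/2)) := by
            apply mul_le_mul_of_nonneg_left hb (hrpowpos _).le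
        _ = 4 * Real.exp 2 * τ * ((1 + r) ^ (-(6:ℝ)) * (1 + r) ^ ((1:ℝ)/2)) := by ring
        _ = 4 * Real.exp 2 * τ * (1 + r) ^ (-(11/2 : ℝ)) := by
            rw [← Real.rpow_add h1rpos]; norm_num
    have hnn : 0 ≤ (1 + r) ^ (-6 + 2 * τ) - (1 + r) ^ (-(6:ℝ)) := by
      have := Real.rpow_le_rpow_of_exponent_le h1r (show -(6:ℝ) ≤ -6 + 2*τ by linarith)
      linarith
    have hKτ : (0:ℝ) ≤ 4 * Real.exp 2 * τ := by positivity
    -- raise to power 4/3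
    have step2 : ((1 + r) ^ (-6 + 2 * τ) - (1 + r) ^ (-(6:ℝ))) ^ ((4:ℝ)/3)
        ≤ (4 * Real.exp 2 * τ) ^ ((4:ℝ)/3) * (1 + r) ^ (-(22/3 : ℝ)) := by
      calc ((1 + r) ^ (-6 + 2 * τ) - (1 + r) ^ (-(6:ℝ))) ^ ((4:ℝ)/3)
          ≤ (4 * Real.exp 2 * τ * (1 + r) ^ (-(11/2 : ℝ))) ^ ((4:ℝ)/3) :=
            Real.rpow_le_rpow hnn step1 (by norm_num)
        _ = (4 * Real.exp 2 * τ) ^ ((4:ℝ)/3) * ((1 + r) ^ (-(11/2 : ℝ))) ^ ((4:ℝ)/3) :=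
            Real.mul_rpow hKτ (hrpowpos _).le
        _ = (4 * Real.exp 2 * τ) ^ ((4:ℝ)/3) * (1 + r) ^ (-(22/3 : ℝ)) := by
            rw [← Real.rpow_mul h1rpos.le]
            norm_num
    -- compare (1+r)^{-22/3} with h p
    have hz : ‖p.1‖ ≤ r := norm_fst_le_koranyi p
    have ht : |p.2| ≤ r ^ 2 := abs_snd_le_koranyi_sq p
    have hstep3 : (1 + r) ^ (-(22/3 : ℝ)) ≤ h p := by
      have hbase : (1 + ‖p.1‖) ^ 2 * (1 + |p.2|) ≤ ((1 + r) ^ (2:ℕ)) ^ (2:ℕ) := by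
        have a1 : (1 + ‖p.1‖) ^ 2 ≤ (1 + r) ^ 2 := by nlinarith [norm_nonneg p.1]
        have a2 : (1 + |p.2|) ≤ (1 + r) ^ 2 := by nlinarith [abs_nonneg p.2]
        calc (1 + ‖p.1‖) ^ 2 * (1 + |p.2|) ≤ (1 + r)^2 * ((1 + r)^2) :=
              mul_le_mul a1 a2 (by positivity) (by positivity)
          _ = ((1 + r) ^ (2:ℕ)) ^ (2:ℕ) := by ring
      have hzpos : (0:ℝ) < 1 + ‖p.1‖ := by positivity
      have htpos : (0:ℝ) < 1 + |p.2| := by positivity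
      have hmono : (((1 + r) ^ (2:ℕ)) ^ (2:ℕ) : ℝ) ^ (-(11/6 : ℝ))
          ≤ ((1 + ‖p.1‖) ^ 2 * (1 + |p.2|)) ^ (-(11/6 : ℝ)) :=
        Real.rpow_le_rpow_of_nonpos (by positivity) hbase (by norm_num)
      have e1 : (((1 + r) ^ (2:ℕ)) ^ (2:ℕ) : ℝ) ^ (-(11/6 : ℝ)) = (1 + r) ^ (-(22/3 : ℝ)) := by
        rw [← pow_mul, ← Real.rpow_natCast (1 + r) 4, ← Real.rpow_mul h1rpos.le]
        norm_num
      have e2 : ((1 + ‖p.1‖) ^ 2 * (1 + |p.2|)) ^ (-(11/6 : ℝ)) = h p := by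
        rw [Real.mul_rpow (by positivity) (by positivity),
          ← Real.rpow_natCast (1 + ‖p.1‖) 2, ← Real.rpow_mul hzpos.le, hh]
        norm_num [Real.norm_eq_abs]
      rw [← e1, ← e2]
      exact hmono
    calc ((1 + r) ^ (-6 + 2 * τ) - (1 + r) ^ (-(6:ℝ))) ^ ((4:ℝ)/3)
        ≤ (4 * Real.exp 2 * τ) ^ ((4:ℝ)/3) * (1 + r) ^ (-(22/3 : ℝ)) := step2
      _ ≤ (4 * Real.exp 2 * τ) ^ ((4:ℝ)/3) * h p := by
          apply mul_le_mul_of_nonneg_left hstep3 (by positivity)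
  -- now bound the integral
  have hSmeas : MeasurableSet {p : ℂ × ℝ | koranyiNorm p < R} :=
    measurableSet_lt measurable_koranyiNorm measurable_const
  set g : ℂ × ℝ → ℝ := fun p => (4 * Real.exp 2 * τ) ^ ((4:ℝ)/3) * h p with hg
  have hgInt : Integrable g := hInt.const_mul _
  have hIle : (∫ p in {p : ℂ × ℝ | koranyiNorm p < R},
      ((1 + koranyiNorm p) ^ (-6 + 2 * τ)
        - (1 + koranyiNorm p) ^ (-(6 : ℝ))) ^ ((4 : ℝ) / 3))
      ≤ ∫ p, g p := by
    have step : (∫ p in {p : ℂ × ℝ | koranyiNorm p < R},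
        ((1 + koranyiNorm p) ^ (-6 + 2 * τ)
          - (1 + koranyiNorm p) ^ (-(6 : ℝ))) ^ ((4 : ℝ) / 3))
        ≤ ∫ p in {p : ℂ × ℝ | koranyiNorm p < R}, g p := by
      apply integral_mono_of_nonneg
      · filter_upwards with p
        have h1r : (1:ℝ) ≤ 1 + koranyiNorm p := by linarith [koranyiNorm_nonneg p]
        have := Real.rpow_le_rpow_of_exponent_le h1r (show -(6:ℝ) ≤ -6 + 2*τ by linarith)
        exact Real.rpow_nonneg (by linarith) _
      · exact hgInt.restrict
      · rw [Filter.EventuallyLE, ae_restrict_iff' hSmeas]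
        filter_upwards with p hp
        exact key p hp
    refine step.trans ?_
    apply setIntegral_le_integral hgInt
    filter_upwards with p
    have := hnonneg p
    rw [hg]
    positivity
  have hgval : (∫ p, g p) = (4 * Real.exp 2 * τ) ^ ((4:ℝ)/3) * I := by
    rw [hg, integral_const_mul, hI]
  have hIintnn : 0 ≤ (∫ p in {p : ℂ × ℝ | koranyiNorm p < R},
      ((1 + koranyiNorm p) ^ (-6 + 2 * τ)
        - (1 + koranyiNorm p) ^ (-(6 : ℝ))) ^ ((4 : ℝ) / 3)) := by
    apply integral_nonneg
    intro p
    have h1r : (1:ℝ) ≤ 1 + koranyiNorm p := by linarith [koranyiNorm_nonneg p]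
    have := Real.rpow_le_rpow_of_exponent_le h1r (show -(6:ℝ) ≤ -6 + 2*τ by linarith)
    exact Real.rpow_nonneg (by linarith) _
  have hKτ : (0:ℝ) ≤ 4 * Real.exp 2 * τ := by positivity
  have hfinal : (∫ p in {p : ℂ × ℝ | koranyiNorm p < R},
      ((1 + koranyiNorm p) ^ (-6 + 2 * τ)
        - (1 + koranyiNorm p) ^ (-(6 : ℝ))) ^ ((4 : ℝ) / 3)) ^ ((3:ℝ)/4)
      ≤ 4 * Real.exp 2 * τ * I ^ ((3:ℝ)/4) := by
    calc (∫ p in {p : ℂ × ℝ | koranyiNorm p < R},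
        ((1 + koranyiNorm p) ^ (-6 + 2 * τ)
          - (1 + koranyiNorm p) ^ (-(6 : ℝ))) ^ ((4 : ℝ) / 3)) ^ ((3:ℝ)/4)
        ≤ ((4 * Real.exp 2 * τ) ^ ((4:ℝ)/3) * I) ^ ((3:ℝ)/4) := by
          apply Real.rpow_le_rpow hIintnn (hIle.trans_eq hgval) (by norm_num)
      _ = (4 * Real.exp 2 * τ) * I ^ ((3:ℝ)/4) := by
          rw [Real.mul_rpow (by positivity) hI0, ← Real.rpow_mul hKτ]
          norm_num
  refine hfinal.trans ?_
  -- 4 e² τ I^{3/4} ≤ C τ |log τ|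
  have hlogτ : Real.log 2 ≤ |Real.log τ| := by
    have hτlt1 : τ < 1 := by linarith
    have : Real.log τ ≤ Real.log (1/2) := Real.log_le_log hτ0 hτ
    have hneg : Real.log (1/2) = -Real.log 2 := by
      rw [one_div, Real.log_inv]
    rw [abs_of_neg (by
      have := Real.log_neg hτ0 hτlt1
      exact this)]
    linarith
  have hlog2 : (1:ℝ)/2 < Real.log 2 := by
    have := Real.log_two_gt_d9
    linarith
  have h2log2 : (1:ℝ) ≤ 2 * Real.log 2 := by linarith
  calc 4 * Real.exp 2 * τ * I ^ ((3:ℝ)/4)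
      = (4 * Real.exp 2 * I ^ ((3:ℝ)/4)) * τ * 1 := by ring
    _ ≤ ((4 * Real.exp 2 * I ^ ((3:ℝ)/4) + 1)) * τ * (2 * |Real.log τ|) := by
        have hA : (0:ℝ) ≤ 4 * Real.exp 2 * I ^ ((3:ℝ)/4) := by positivity
        have h1 : (1:ℝ) ≤ 2 * |Real.log τ| := by
          calc (1:ℝ) ≤ 2 * Real.log 2 := h2log2
            _ ≤ 2 * |Real.log τ| := by linarith
        calc (4 * Real.exp 2 * I ^ ((3:ℝ)/4)) * τ * 1
            ≤ (4 * Real.exp 2 * I ^ ((3:ℝ)/4)) * τ * (2 * |Real.log τ|) :=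
              mul_le_mul_of_nonneg_left h1 (by positivity)
          _ ≤ ((4 * Real.exp 2 * I ^ ((3:ℝ)/4) + 1)) * τ * (2 * |Real.log τ|) := by
              apply mul_le_mul_of_nonneg_right _ (by positivity)
              nlinarith [hτ0.le, hA]
    _ = (4 * Real.exp 2 * I ^ ((3:ℝ)/4) + 1) * 2 * (τ * |Real.log τ|) := by ring
end
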